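/- Let H be a primitive, aperiodic and marked substitution over a finite alphabet A. Then there exists a constant C with 0 < C < 1 such that the following holds: for every z ∈ A^ℕ whose factors all lie in L_H, and for any two bispecial words U and V of L_H occurring in z at positions i and j respectively with i < j, j < i + |U| (so the occurrences overlap) and |U| ≤ |V|, the length of the overlap satisfies i + |U| − j ≤ C·|U|. -/

import Mathlib

open Filter Topology MeasureTheory

variable {A : Type*}

/-- The shift map on infinite words. -/
def shift (x : ℕ → A) : ℕ → A := fun n => x (n + 1)

/-- Image of a finite word under a substitution. -/
def wordMap (H : A → List A) (w : List A) : List A := w.flatMap H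

/-- Image of an infinite word under a substitution (each `H a` nonempty makes this the
infinite concatenation `H(x₀)H(x₁)⋯`). -/
def substSeq (H : A → List A) (x : ℕ → A) : ℕ → A :=
  fun n => (wordMap H ((List.range (n + 1)).map x)).getD n (x 0)

/-- The prefix of length `n` of an infinite word. -/
def prefixWord (x : ℕ → A) (n : ℕ) : List A := (List.range n).map x

/-- The factor of length `n` at position `i` of an infinite word. -/
def factorAt (x : ℕ → A) (i n : ℕ) : List A := (List.range n).map fun j => x (i + j)

/-- The language of an infinite word: the set of its finite factors. -/
def Lang (u : ℕ → A) : Set (List A) := {w | ∃ i, w = factorAt u i w.length}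

/-- A sequence is (purely) periodic for the shift. -/
def PeriodicSeq (x : ℕ → A) : Prop := ∃ m, 0 < m ∧ ∀ n, x (n + m) = x n

/-- `u` is a fixed point of the substitution `H`. -/
def IsFixedPointSubst (H : A → List A) (u : ℕ → A) : Prop := substSeq H u = u

/-- `H` is primitive: some power of `H` maps every letter onto a word containing
every letter. -/
def PrimitiveSubst (H : A → List A) : Prop :=
  ∃ k, 0 < k ∧ ∀ a b : A, b ∈ (wordMap H)^[k] [a]

/-- `H` is aperiodic: no fixed point of `H` is periodic for the shift. -/
def AperiodicSubst (H : A → List A) : Prop :=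
  ∀ u : ℕ → A, IsFixedPointSubst H u → ¬ PeriodicSeq u

/-- `H` is marked: first letters of images are pairwise distinct, and so are last letters. -/
def MarkedSubst (H : A → List A) (hne : ∀ a, H a ≠ []) : Prop :=
  Function.Injective (fun a => (H a).head (hne a)) ∧
  Function.Injective (fun a => (H a).getLast (hne a))

/-- `H` is 2-full (with respect to the fixed point `u`): every word of length 2 belongs
to the language. -/
def TwoFull (H : A → List A) (u : ℕ → A) : Prop :=
  ∀ w : List A, w.length = 2 → w ∈ Lang u

/-- The attractor `K`: closure of the shift-orbit of the fixed point `u`. -/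
def orbitClosure [TopologicalSpace A] (u : ℕ → A) : Set (ℕ → A) :=
  closure {y | ∃ n, y = shift^[n] u}

/-- `δ(x)`: the length of the maximal prefix of `x` belonging to the language of `u`. -/
noncomputable def delta (u x : ℕ → A) : ℕ := sSup {n | prefixWord x n ∈ Lang u}

/-- The renormalization operator `R`. -/
noncomputable def renorm (H : A → List A) (V : (ℕ → A) → ℝ) : (ℕ → A) → ℝ :=
  fun x => ∑ i ∈ Finset.range (H (x 0)).length, V (shift^[i] (substSeq H x))

/-- `t_n(x) = |H^n(x₀)|`. -/
def tlen (H : A → List A) (n : ℕ) (x : ℕ → A) : ℕ := ((wordMap H)^[n] [x 0]).length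

/-- An accident occurs at time `b`. -/
def AccidentAt (u x : ℕ → A) (b : ℕ) : Prop :=
  0 < b ∧ delta u x - b < delta u (shift^[b] x) ∧
    ∀ i < b, delta u (shift^[i] x) = delta u x - i

/-- The first accident time of `x` (junk value `0` if there is none). -/
noncomputable def firstAccident (u x : ℕ → A) : ℕ := sInf {b | AccidentAt u x b}

/-- The `j`-th accident time `B_j` of `x`, defined inductively. -/
noncomputable def accidentTime (u x : ℕ → A) : ℕ → ℕ
  | 0 => 0
  | j + 1 => accidentTime u x j + firstAccident u (shift^[accidentTime u x j] x)

/-- The set of (genuine) accident times of `x`. -/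
def AccidentSet (u x : ℕ → A) : Set ℕ :=
  {B | ∃ j : ℕ, B = accidentTime u x (j + 1) ∧
        AccidentAt u (shift^[accidentTime u x j] x)
          (firstAccident u (shift^[accidentTime u x j] x))}

/-- A word is right special. -/
def RightSpecial (u : ℕ → A) (w : List A) : Prop :=
  ∃ b c : A, b ≠ c ∧ w ++ [b] ∈ Lang u ∧ w ++ [c] ∈ Lang u

/-- A word is left special. -/
def LeftSpecial (u : ℕ → A) (w : List A) : Prop :=
  ∃ a b : A, a ≠ b ∧ a :: w ∈ Lang u ∧ b :: w ∈ Lang u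

/-- A word is bispecial. -/
def Bispecial (u : ℕ → A) (w : List A) : Prop := RightSpecial u w ∧ LeftSpecial u w

/-- `l` is a recognizability constant for `H`: every long enough word of the language
admits a unique desubstitution. -/
def RecogBound (H : A → List A) (u : ℕ → A) (l : ℕ) : Prop :=
  ∀ z ∈ Lang u, l < z.length →
    ∃! d : List A × List A × List A,
      ∃ s p : A,
        z = d.1 ++ wordMap H d.2.1 ++ d.2.2 ∧
        d.2.1 ∈ Lang u ∧
        d.1 <:+ H s ∧ d.1.length < (H s).length ∧
        d.2.2 <+: H p ∧ d.2.2.length < (H p).length ∧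
        ([s] ++ d.2.1 ++ [p]) ∈ Lang u

/-- The incidence matrix of a substitution, with real entries. -/
def incMat [Fintype A] [DecidableEq A] (H : A → List A) : Matrix A A ℝ :=
  fun a b => ((H a).count b : ℝ)

/-- `lam` is the Perron–Frobenius eigenvalue of the incidence matrix of the (primitive)
substitution `H`: it admits an entrywise positive eigenvector. -/
def IsPerronValue [Fintype A] [DecidableEq A] (H : A → List A) (lam : ℝ) : Prop :=
  ∃ v : A → ℝ, (∀ a, 0 < v a) ∧ (incMat H).mulVec v = lam • v

/-- Concatenation of a finite word with an infinite word. -/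
def catWord (S : List A) (y : ℕ → A) : ℕ → A :=
  fun n => S.getD n (y (n - S.length))

/-!
Pass to a power `σ = H^k` in which every image contains every letter; `σ` is still marked and
still fixes `u`. Marking gives recognizability: two long equal factors of `u` are cut into
`σ`-blocks in the same way. Otherwise the two block decompositions can be followed in parallel
by a finite-state process, which forces a bounded period on arbitrarily long factors and hence,
by uniform recurrence, on `u` itself. So a long bispecial word is `σ(x)` for a bispecial `x`, and
a bispecial proper suffix `w` of a bispecial `U` desubstitutes together with `U` down to
`w = σ^k(w₀)`, `U = σ^k(r w₀)` with `w₀` short and `r ≠ []`. As all images under `σ^k` have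
comparable lengths, `|w| ≤ K (|U| - |w|)`, i.e. `|w| ≤ K/(K+1) |U|`. Finally, the overlap of
the two occurrences is a suffix of `U` and a prefix of `V`, hence right special and left
special.
-/

@[simp] lemma length_factorAt (x : ℕ → A) (i n : ℕ) : (factorAt x i n).length = n := by
  simp [factorAt]

@[simp] lemma getElem_factorAt (x : ℕ → A) (i n j : ℕ) (h : j < (factorAt x i n).length) :
    (factorAt x i n)[j] = x (i + j) := by
  simp [factorAt]

lemma factorAt_add (x : ℕ → A) (i a b : ℕ) :
    factorAt x i (a + b) = factorAt x i a ++ factorAt x (i + a) b := by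
  simp [factorAt, List.range_add, Function.comp_def, Nat.add_assoc]

lemma factorAt_succ (x : ℕ → A) (i n : ℕ) :
    factorAt x i (n + 1) = factorAt x i n ++ [x (i + n)] :=
  factorAt_add x i n 1

lemma factorAt_succ' (x : ℕ → A) (i n : ℕ) :
    factorAt x i (n + 1) = x i :: factorAt x (i + 1) n := by
  rw [Nat.add_comm, factorAt_add]
  rfl

@[simp] lemma length_prefixWord (x : ℕ → A) (n : ℕ) : (prefixWord x n).length = n := by
  simp [prefixWord]

@[simp] lemma getElem_prefixWord (x : ℕ → A) (n j : ℕ) (h : j < (prefixWord x n).length) :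
    (prefixWord x n)[j] = x j := by
  simp [prefixWord]

lemma prefixWord_eq_factorAt (x : ℕ → A) (n : ℕ) : prefixWord x n = factorAt x 0 n := by
  simp [prefixWord, factorAt]

lemma factorAt_eq_factorAt_iff (x : ℕ → A) {i i' n : ℕ} :
    factorAt x i n = factorAt x i' n ↔ ∀ j < n, x (i + j) = x (i' + j) := by
  simp [factorAt]

lemma factorAt_mem_Lang (u : ℕ → A) (i n : ℕ) : factorAt u i n ∈ Lang u :=
  ⟨i, by rw [length_factorAt]⟩

lemma exists_eq_factorAt_of_infix {x : ℕ → A} {w : List A} {i n : ℕ}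
    (h : w <:+: factorAt x i n) :
    ∃ p, i ≤ p ∧ p + w.length ≤ i + n ∧ w = factorAt x p w.length := by
  obtain ⟨s, t, hst⟩ := h
  have hlen : n = s.length + (w.length + t.length) := by
    simpa [Nat.add_assoc] using (congrArg List.length hst).symm
  rw [hlen, factorAt_add, factorAt_add, ← List.append_assoc] at hst
  obtain ⟨hsw, -⟩ := List.append_inj' hst (by simp)
  exact ⟨i + s.length, by omega, by omega, (List.append_inj hsw (by simp)).2⟩

lemma mem_Lang_of_infix {u : ℕ → A} {w v : List A} (hv : v ∈ Lang u) (h : w <:+: v) :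
    w ∈ Lang u := by
  obtain ⟨i, hi⟩ := hv
  rw [hi] at h
  obtain ⟨p, -, -, hp⟩ := exists_eq_factorAt_of_infix h
  exact ⟨p, hp⟩

section Substitution

variable {σ : A → List A}

@[simp] lemma wordMap_nil (σ : A → List A) : wordMap σ [] = [] := rfl

@[simp] lemma wordMap_singleton (σ : A → List A) (a : A) : wordMap σ [a] = σ a := by
  simp [wordMap]

lemma wordMap_cons (σ : A → List A) (a : A) (x : List A) :
    wordMap σ (a :: x) = σ a ++ wordMap σ x := by
  simp [wordMap]

@[simp] lemma wordMap_append (σ : A → List A) (x y : List A) :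
    wordMap σ (x ++ y) = wordMap σ x ++ wordMap σ y := by
  simp [wordMap]

lemma length_wordMap (σ : A → List A) (x : List A) :
    (wordMap σ x).length = (x.map fun a => (σ a).length).sum := by
  simp [wordMap, List.length_flatMap]

lemma wordMap_iterate_append (σ : A → List A) (N : ℕ) (x y : List A) :
    (wordMap σ)^[N] (x ++ y) = (wordMap σ)^[N] x ++ (wordMap σ)^[N] y := by
  induction N generalizing x y with
  | zero => rfl
  | succ N ih => simp only [Function.iterate_succ_apply, wordMap_append, ih]

lemma wordMap_iterate_singleton (σ : A → List A) (N : ℕ) :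
    wordMap (fun a => (wordMap σ)^[N] [a]) = (wordMap σ)^[N] := by
  funext w
  induction w with
  | nil => induction N <;> simp_all [Function.iterate_succ_apply']
  | cons a w ih => rw [wordMap_cons, ih, ← wordMap_iterate_append, List.singleton_append]

lemma length_le_length_wordMap (hne : ∀ a, σ a ≠ []) (x : List A) :
    x.length ≤ (wordMap σ x).length := by
  simpa [length_wordMap] using List.card_nsmul_le_sum (x.map fun a => (σ a).length) 1
    (by simp [Nat.one_le_iff_ne_zero, hne])

lemma two_mul_length_le_length_wordMap (h2 : ∀ a, 2 ≤ (σ a).length) (x : List A) :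
    2 * x.length ≤ (wordMap σ x).length := by
  simpa [length_wordMap, mul_comm] using List.card_nsmul_le_sum (x.map fun a => (σ a).length) 2
    (by simpa using fun a _ => h2 a)

lemma wordMap_ne_nil (hne : ∀ a, σ a ≠ []) {x : List A} (hx : x ≠ []) : wordMap σ x ≠ [] := by
  obtain ⟨a, x, rfl⟩ := List.exists_cons_of_ne_nil hx
  simp [wordMap_cons, hne a]

lemma wordMap_iterate_singleton_ne_nil (hne : ∀ a, σ a ≠ []) (N : ℕ) (a : A) :
    (wordMap σ)^[N] [a] ≠ [] := by
  induction N with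
  | zero => simp
  | succ N ih => rw [Function.iterate_succ_apply']; exact wordMap_ne_nil hne ih

lemma head_wordMap (hne : ∀ a, σ a ≠ []) {x : List A} (hx : x ≠ [])
    (h : wordMap σ x ≠ []) : (wordMap σ x).head h = (σ (x.head hx)).head (hne _) := by
  obtain ⟨a, x, rfl⟩ := List.exists_cons_of_ne_nil hx
  simp [wordMap_cons, List.head_append_of_ne_nil (hne a)]

lemma getLast_wordMap (hne : ∀ a, σ a ≠ []) {x : List A} (hx : x ≠ [])
    (h : wordMap σ x ≠ []) : (wordMap σ x).getLast h = (σ (x.getLast hx)).getLast (hne _) := by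
  obtain ⟨x, a, rfl⟩ := (List.eq_nil_or_concat x).resolve_left hx
  simp [List.getLast_append_right (hne a)]

lemma head_wordMap_iterate_singleton (hne : ∀ a, σ a ≠ []) (N : ℕ) (a : A) :
    ((wordMap σ)^[N] [a]).head (wordMap_iterate_singleton_ne_nil hne N a)
      = (fun a => (σ a).head (hne a))^[N] a := by
  induction N with
  | zero => rfl
  | succ N ih =>
    simp only [Function.iterate_succ_apply',
      head_wordMap hne (wordMap_iterate_singleton_ne_nil hne N a), ih]

lemma getLast_wordMap_iterate_singleton (hne : ∀ a, σ a ≠ []) (N : ℕ) (a : A) :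
    ((wordMap σ)^[N] [a]).getLast (wordMap_iterate_singleton_ne_nil hne N a)
      = (fun a => (σ a).getLast (hne a))^[N] a := by
  induction N with
  | zero => rfl
  | succ N ih =>
    simp only [Function.iterate_succ_apply',
      getLast_wordMap hne (wordMap_iterate_singleton_ne_nil hne N a), ih]

lemma MarkedSubst.iterate {hne : ∀ a, σ a ≠ []} (hm : MarkedSubst σ hne) (N : ℕ) :
    MarkedSubst (fun a => (wordMap σ)^[N] [a]) (wordMap_iterate_singleton_ne_nil hne N) :=
  ⟨(funext (head_wordMap_iterate_singleton hne N)) ▸ hm.1.iterate N,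
    (funext (getLast_wordMap_iterate_singleton hne N)) ▸ hm.2.iterate N⟩

lemma IsSuffix.of_wordMap (hne : ∀ a, σ a ≠ [])
    (hl : Function.Injective fun a => (σ a).getLast (hne a)) {x y : List A}
    (h : wordMap σ x <:+ wordMap σ y) : x <:+ y := by
  induction x using List.reverseRecOn generalizing y with
  | nil => exact List.nil_suffix
  | append_singleton x a ih =>
    rcases List.eq_nil_or_concat y with rfl | ⟨y, b, rfl⟩
    · have := (length_le_length_wordMap hne (x ++ [a])).trans h.length_le
      simp at this
    simp only [List.concat_eq_append, wordMap_append, wordMap_singleton] at h ⊢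
    have hab : a = b := hl <| by
      simpa [List.getLast_append_right (hne a), List.getLast_append_right (hne b)]
        using h.getLast (List.append_ne_nil_of_right_ne_nil _ (hne a))
    subst hab
    exact (List.suffix_append_inj_of_length_eq rfl).2
      ⟨ih ((List.suffix_append_inj_of_length_eq rfl).1 h).1, rfl⟩

lemma wordMap_injective (hne : ∀ a, σ a ≠ [])
    (hl : Function.Injective fun a => (σ a).getLast (hne a)) : Function.Injective (wordMap σ) := by
  intro x y h
  have hxy : x <:+ y := IsSuffix.of_wordMap hne hl (h ▸ List.suffix_refl _)
  have hyx : y <:+ x := IsSuffix.of_wordMap hne hl (h ▸ List.suffix_refl _)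
  exact hxy.eq_of_length_le hyx.length_le

end Substitution

section FixedPoint

variable {σ : A → List A} {u : ℕ → A}

/-- Position in `u = σ(u)` at which the block `σ (u k)` starts. -/
def blockStart (σ : A → List A) (u : ℕ → A) (k : ℕ) : ℕ := (wordMap σ (prefixWord u k)).length

lemma prefixWord_succ (u : ℕ → A) (k : ℕ) : prefixWord u (k + 1) = prefixWord u k ++ [u k] := by
  simp [prefixWord_eq_factorAt, factorAt_succ]

lemma prefixWord_prefix (u : ℕ → A) {k k' : ℕ} (h : k ≤ k') :
    prefixWord u k <+: prefixWord u k' :=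
  ⟨factorAt u k (k' - k), by
    have := factorAt_add u 0 k (k' - k)
    rw [Nat.zero_add, Nat.add_sub_cancel' h] at this
    rw [prefixWord_eq_factorAt, prefixWord_eq_factorAt, this]⟩

@[simp] lemma blockStart_zero : blockStart σ u 0 = 0 := rfl

lemma blockStart_succ (k : ℕ) :
    blockStart σ u (k + 1) = blockStart σ u k + (σ (u k)).length := by
  simp [blockStart, prefixWord_succ]

lemma blockStart_strictMono (hne : ∀ a, σ a ≠ []) : StrictMono (blockStart σ u) :=
  strictMono_nat_of_lt_succ fun k => by
    rw [blockStart_succ]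
    exact Nat.lt_add_of_pos_right (List.length_pos_iff.2 (hne _))

lemma le_blockStart (hne : ∀ a, σ a ≠ []) (k : ℕ) : k ≤ blockStart σ u k :=
  (blockStart_strictMono hne).id_le k

lemma wordMap_prefixWord (hne : ∀ a, σ a ≠ []) (hfix : IsFixedPointSubst σ u) (k : ℕ) :
    wordMap σ (prefixWord u k) = prefixWord u (blockStart σ u k) := by
  have hmono : ∀ {k k'}, k ≤ k' → wordMap σ (prefixWord u k) <+: wordMap σ (prefixWord u k') :=
    fun h => by
      obtain ⟨t, ht⟩ := prefixWord_prefix u h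
      exact ⟨wordMap σ t, by rw [← ht, wordMap_append]⟩
  refine List.ext_getElem (by simp [blockStart]) fun j hj _ => ?_
  have hj' : j < (wordMap σ (prefixWord u (j + 1))).length := le_blockStart hne (j + 1)
  have hu : (wordMap σ (prefixWord u (j + 1)))[j] = u j := by
    have : (wordMap σ (prefixWord u (j + 1))).getD j (u 0) = u j := congrFun hfix j
    rwa [List.getD_eq_getElem _ _ hj'] at this
  rw [getElem_prefixWord]
  rcases le_total k (j + 1) with h | h
  · rw [(hmono h).getElem hj, hu]
  · rw [← (hmono h).getElem hj', hu]

lemma factorAt_blockStart (hne : ∀ a, σ a ≠ []) (hfix : IsFixedPointSubst σ u) (k l : ℕ) :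
    factorAt u (blockStart σ u k) (blockStart σ u (k + l) - blockStart σ u k)
      = wordMap σ (factorAt u k l) := by
  have hle : blockStart σ u k ≤ blockStart σ u (k + l) :=
    (blockStart_strictMono hne).monotone (Nat.le_add_right k l)
  have h := wordMap_prefixWord hne hfix (k + l)
  rw [prefixWord_eq_factorAt, factorAt_add, wordMap_append, ← prefixWord_eq_factorAt,
    wordMap_prefixWord hne hfix, prefixWord_eq_factorAt, prefixWord_eq_factorAt,
    ← Nat.add_sub_cancel' hle, factorAt_add, Nat.zero_add, Nat.zero_add] at h
  exact (List.append_cancel_left h).symm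

lemma getElem_block (hne : ∀ a, σ a ≠ []) (hfix : IsFixedPointSubst σ u) (k i : ℕ)
    (hi : i < (σ (u k)).length) : (σ (u k))[i] = u (blockStart σ u k + i) := by
  have h := factorAt_blockStart hne hfix k 1
  rw [blockStart_succ, Nat.add_sub_cancel_left, show factorAt u k 1 = [u k] by simp [factorAt],
    wordMap_singleton] at h
  rw [List.getElem_of_eq h.symm hi, getElem_factorAt]

lemma wordMap_iterate_prefixWord (hne : ∀ a, σ a ≠ []) (hfix : IsFixedPointSubst σ u)
    (N k : ℕ) :
    ∃ k' ≥ k, (wordMap σ)^[N] (prefixWord u k) = prefixWord u k' := by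
  induction N with
  | zero => exact ⟨k, le_rfl, rfl⟩
  | succ N ih =>
    obtain ⟨k', hk', h⟩ := ih
    refine ⟨blockStart σ u k', hk'.trans (le_blockStart hne k'), ?_⟩
    rw [Function.iterate_succ_apply', h, wordMap_prefixWord hne hfix]

lemma IsFixedPointSubst.iterate (hne : ∀ a, σ a ≠ []) (hfix : IsFixedPointSubst σ u) (N : ℕ) :
    IsFixedPointSubst (fun a => (wordMap σ)^[N] [a]) u := by
  funext n
  change (wordMap _ (prefixWord u (n + 1))).getD n (u 0) = u n
  obtain ⟨k', hk', h⟩ := wordMap_iterate_prefixWord hne hfix N (n + 1)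
  rw [wordMap_iterate_singleton, h, List.getD_eq_getElem _ _ (by simp; omega),
    getElem_prefixWord]

end FixedPoint

section BlockState

variable {σ : A → List A} {u : ℕ → A}

def IsCut (σ : A → List A) (u : ℕ → A) (p : ℕ) : Prop := p ∈ Set.range (blockStart σ u)

def blockIdx (σ : A → List A) (u : ℕ → A) (p : ℕ) : ℕ :=
  Nat.findGreatest (fun k => blockStart σ u k ≤ p) p

/-- The letter `a` and offset `i` such that position `p` of `u` is the `i`-th letter of the
block `σ a`. -/
def blockState (σ : A → List A) (u : ℕ → A) (p : ℕ) : A × ℕ :=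
  (u (blockIdx σ u p), p - blockStart σ u (blockIdx σ u p))

lemma blockStart_blockIdx_le (p : ℕ) : blockStart σ u (blockIdx σ u p) ≤ p :=
  Nat.findGreatest_spec (P := fun k => blockStart σ u k ≤ p) (Nat.zero_le p) (Nat.zero_le p)

lemma lt_blockStart_blockIdx_succ (hne : ∀ a, σ a ≠ []) (p : ℕ) :
    p < blockStart σ u (blockIdx σ u p + 1) := by
  by_cases h : blockIdx σ u p + 1 ≤ p
  · exact lt_of_not_ge (Nat.findGreatest_is_greatest (P := fun k => blockStart σ u k ≤ p)
      (Nat.lt_succ_self _) h)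
  · have := le_blockStart (u := u) hne (blockIdx σ u p + 1)
    have := Nat.findGreatest_le (P := fun k => blockStart σ u k ≤ p) p
    simp only [blockIdx] at *
    omega

lemma blockIdx_eq (hne : ∀ a, σ a ≠ []) {p k : ℕ} (h₁ : blockStart σ u k ≤ p)
    (h₂ : p < blockStart σ u (k + 1)) : blockIdx σ u p = k := by
  have hmono := blockStart_strictMono (u := u) hne
  have h₃ := blockStart_blockIdx_le (σ := σ) (u := u) p
  have h₄ := lt_blockStart_blockIdx_succ (u := u) hne p
  by_contra hk
  rcases Nat.lt_or_gt_of_ne hk with hk | hk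
  · have := hmono.monotone (show blockIdx σ u p + 1 ≤ k by omega); omega
  · have := hmono.monotone (show k + 1 ≤ blockIdx σ u p by omega); omega

lemma blockState_snd_lt (hne : ∀ a, σ a ≠ []) (p : ℕ) :
    (blockState σ u p).2 < (σ (blockState σ u p).1).length := by
  have h₁ := blockStart_blockIdx_le (σ := σ) (u := u) p
  have h₂ := lt_blockStart_blockIdx_succ (u := u) hne p
  rw [blockStart_succ] at h₂
  simp only [blockState]
  omega

lemma getElem_blockState (hne : ∀ a, σ a ≠ []) (hfix : IsFixedPointSubst σ u) (p : ℕ) :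
    (σ (blockState σ u p).1)[(blockState σ u p).2]'(blockState_snd_lt hne p) = u p := by
  simp only [blockState]
  rw [getElem_block hne hfix, Nat.add_sub_cancel' (blockStart_blockIdx_le p)]

lemma eq_of_blockState_eq (hne : ∀ a, σ a ≠ []) (hfix : IsFixedPointSubst σ u) {p p' : ℕ}
    (h : blockState σ u p = blockState σ u p') : u p = u p' := by
  rw [← getElem_blockState hne hfix p, ← getElem_blockState hne hfix p']
  congr 2
  rw [h]

lemma isCut_iff_blockState_snd_eq_zero (hne : ∀ a, σ a ≠ []) {p : ℕ} :
    IsCut σ u p ↔ (blockState σ u p).2 = 0 := by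
  constructor
  · rintro ⟨k, rfl⟩
    rw [blockState, blockIdx_eq hne le_rfl (blockStart_strictMono hne (Nat.lt_succ_self k)),
      Nat.sub_self]
  · intro h
    have := blockStart_blockIdx_le (σ := σ) (u := u) p
    simp only [blockState] at h
    exact ⟨blockIdx σ u p, by omega⟩

lemma isCut_succ_iff (hne : ∀ a, σ a ≠ []) {p : ℕ} :
    IsCut σ u (p + 1) ↔ (blockState σ u p).2 + 1 = (σ (blockState σ u p).1).length := by
  have hmono := blockStart_strictMono (u := u) hne
  have h₁ := blockStart_blockIdx_le (σ := σ) (u := u) p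
  have h₂ := lt_blockStart_blockIdx_succ (u := u) hne p
  have h₃ := blockStart_succ (σ := σ) (u := u) (blockIdx σ u p)
  simp only [blockState]
  constructor
  · rintro ⟨j, hj⟩
    have hj₁ : blockIdx σ u p < j := hmono.lt_iff_lt.1 (by omega)
    have hj₂ : j ≤ blockIdx σ u p + 1 := hmono.le_iff_le.1 (by omega)
    obtain rfl : j = blockIdx σ u p + 1 := by omega
    omega
  · intro h
    exact ⟨blockIdx σ u p + 1, by omega⟩

lemma isCut_iff_of_blockState_eq (hne : ∀ a, σ a ≠ []) {p p' : ℕ}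
    (h : blockState σ u p = blockState σ u p') : IsCut σ u p ↔ IsCut σ u p' := by
  rw [isCut_iff_blockState_snd_eq_zero hne, isCut_iff_blockState_snd_eq_zero hne, h]

lemma isCut_succ_iff_of_blockState_eq (hne : ∀ a, σ a ≠ []) {p p' : ℕ}
    (h : blockState σ u p = blockState σ u p') : IsCut σ u (p + 1) ↔ IsCut σ u (p' + 1) := by
  rw [isCut_succ_iff hne, isCut_succ_iff hne, h]

lemma blockState_succ_of_not_isCut (hne : ∀ a, σ a ≠ []) {p : ℕ} (h : ¬IsCut σ u (p + 1)) :
    blockState σ u (p + 1) = ((blockState σ u p).1, (blockState σ u p).2 + 1) := by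
  have h₁ := blockStart_blockIdx_le (σ := σ) (u := u) p
  have h₂ := lt_blockStart_blockIdx_succ (u := u) hne p
  have h₃ : p + 1 ≠ blockStart σ u (blockIdx σ u p + 1) := fun h' => h ⟨_, h'.symm⟩
  have hidx : blockIdx σ u (p + 1) = blockIdx σ u p := blockIdx_eq hne (by omega) (by omega)
  simp only [blockState, hidx]
  congr 1
  omega

lemma head_eq_of_isCut (hne : ∀ a, σ a ≠ []) (hfix : IsFixedPointSubst σ u) {p : ℕ}
    (h : IsCut σ u p) : (σ (blockState σ u p).1).head (hne _) = u p := by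
  rw [← getElem_blockState hne hfix p, List.head_eq_getElem]
  congr 1
  exact ((isCut_iff_blockState_snd_eq_zero hne).1 h).symm

lemma getLast_eq_of_isCut_succ (hne : ∀ a, σ a ≠ []) (hfix : IsFixedPointSubst σ u) {p : ℕ}
    (h : IsCut σ u (p + 1)) : (σ (blockState σ u p).1).getLast (hne _) = u p := by
  rw [← getElem_blockState hne hfix p, List.getLast_eq_getElem]
  congr 1
  have := (isCut_succ_iff hne).1 h
  omega

end BlockState

section Determinism

variable {σ : A → List A} {u : ℕ → A} (hne : ∀ a, σ a ≠ []) (hfix : IsFixedPointSubst σ u)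
include hne hfix

lemma blockState_eq_of_isCut (hh : Function.Injective fun a => (σ a).head (hne a)) {p p' : ℕ}
    (hp : IsCut σ u p) (hp' : IsCut σ u p') (h : u p = u p') :
    blockState σ u p = blockState σ u p' :=
  Prod.ext (hh <| by simp only [head_eq_of_isCut hne hfix hp, head_eq_of_isCut hne hfix hp', h])
    (((isCut_iff_blockState_snd_eq_zero hne).1 hp).trans
      ((isCut_iff_blockState_snd_eq_zero hne).1 hp').symm)

lemma blockState_succ_eq (hh : Function.Injective fun a => (σ a).head (hne a)) {p p' : ℕ}
    (hs : blockState σ u p = blockState σ u p') (h : u (p + 1) = u (p' + 1)) :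
    blockState σ u (p + 1) = blockState σ u (p' + 1) := by
  have hcut := isCut_succ_iff_of_blockState_eq hne hs
  by_cases hc : IsCut σ u (p + 1)
  · exact blockState_eq_of_isCut hne hfix hh hc (hcut.1 hc) h
  · rw [blockState_succ_of_not_isCut hne hc, blockState_succ_of_not_isCut hne (hcut.not.1 hc),
      hs]

lemma blockState_eq_of_succ (hl : Function.Injective fun a => (σ a).getLast (hne a)) {p p' : ℕ}
    (hs : blockState σ u (p + 1) = blockState σ u (p' + 1)) (h : u p = u p') :
    blockState σ u p = blockState σ u p' := by
  have hcut := isCut_iff_of_blockState_eq hne hs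
  by_cases hc : IsCut σ u (p + 1)
  · have hc' := hcut.1 hc
    have ha : (blockState σ u p).1 = (blockState σ u p').1 := hl <| by
      simp only [getLast_eq_of_isCut_succ hne hfix hc, getLast_eq_of_isCut_succ hne hfix hc', h]
    have h₁ := (isCut_succ_iff hne).1 hc
    have h₂ := (isCut_succ_iff hne).1 hc'
    rw [← ha] at h₂
    exact Prod.ext ha (by omega)
  · rw [blockState_succ_of_not_isCut hne hc,
      blockState_succ_of_not_isCut hne (hcut.not.1 hc)] at hs
    obtain ⟨h₁, h₂⟩ := Prod.mk.inj hs
    exact Prod.ext h₁ (by omega)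

/-- The transition of the finite-state process in `exists_period_of_no_common_cut`: with no
common cut, the block states at `p` and `p'` determine the one at `p + 1`. -/
lemma blockState_succ_eq_of_no_common_cut (hh : Function.Injective fun a => (σ a).head (hne a))
    {p p' r r' : ℕ} (hs : blockState σ u p = blockState σ u r)
    (hs' : blockState σ u p' = blockState σ u r')
    (hp : u (p + 1) = u (p' + 1)) (hr : u (r + 1) = u (r' + 1))
    (hpc : ¬(IsCut σ u (p + 1) ∧ IsCut σ u (p' + 1)))
    (hrc : ¬(IsCut σ u (r + 1) ∧ IsCut σ u (r' + 1))) :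
    blockState σ u (p + 1) = blockState σ u (r + 1) := by
  have hcut := isCut_succ_iff_of_blockState_eq hne hs
  by_cases hc : IsCut σ u (p + 1)
  · have hc' : ¬IsCut σ u (p' + 1) := fun h => hpc ⟨hc, h⟩
    have hrc' : ¬IsCut σ u (r' + 1) := fun h => hrc ⟨hcut.1 hc, h⟩
    have : u (p' + 1) = u (r' + 1) := eq_of_blockState_eq hne hfix <| by
      rw [blockState_succ_of_not_isCut hne hc', blockState_succ_of_not_isCut hne hrc', hs']
    exact blockState_succ_eq hne hfix hh hs (hp.trans (this.trans hr.symm))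
  · rw [blockState_succ_of_not_isCut hne hc,
      blockState_succ_of_not_isCut hne (hcut.not.1 hc), hs]

end Determinism

def maxLen [Fintype A] (σ : A → List A) : ℕ := Finset.univ.sup fun a => (σ a).length

lemma length_le_maxLen [Fintype A] (σ : A → List A) (a : A) : (σ a).length ≤ maxLen σ :=
  Finset.le_sup (f := fun a => (σ a).length) (Finset.mem_univ a)

def BlockStatesAgree (σ : A → List A) (u : ℕ → A) (q q' n : ℕ) : Prop :=
  ∀ ρ < n, blockState σ u (q + ρ) = blockState σ u (q' + ρ)

section Windows

variable {σ : A → List A} {u : ℕ → A} (hne : ∀ a, σ a ≠ []) (hfix : IsFixedPointSubst σ u)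
include hne hfix

lemma blockStatesAgree_of_blockState_eq (hh : Function.Injective fun a => (σ a).head (hne a))
    (hl : Function.Injective fun a => (σ a).getLast (hne a)) {q q' n ρ₀ : ℕ}
    (hC : ∀ j < n, u (q + j) = u (q' + j)) (hρ₀ : ρ₀ < n)
    (h₀ : blockState σ u (q + ρ₀) = blockState σ u (q' + ρ₀)) : BlockStatesAgree σ u q q' n := by
  intro ρ hρ
  rcases le_total ρ₀ ρ with h | h
  · induction ρ, h using Nat.le_induction with
    | base => exact h₀
    | succ m _ ih => exact blockState_succ_eq hne hfix hh (ih (by omega)) (hC (m + 1) hρ)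
  · induction h using Nat.decreasingInduction with
    | self => exact h₀
    | of_succ k hk ih => exact blockState_eq_of_succ hne hfix hl (ih (by omega)) (hC k (by omega))

lemma blockState_add_eq_of_no_common_cut (hh : Function.Injective fun a => (σ a).head (hne a))
    {q q' n ρ₁ ρ₂ : ℕ} (hC : ∀ j < n, u (q + j) = u (q' + j))
    (hD : ∀ j < n, ¬(IsCut σ u (q + j) ∧ IsCut σ u (q' + j))) (h₁₂ : ρ₁ ≤ ρ₂)
    (h : blockState σ u (q + ρ₁) = blockState σ u (q + ρ₂))
    (h' : blockState σ u (q' + ρ₁) = blockState σ u (q' + ρ₂)) (i : ℕ) (hi : ρ₂ + i < n) :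
    blockState σ u (q + (ρ₁ + i)) = blockState σ u (q + (ρ₂ + i)) ∧
      blockState σ u (q' + (ρ₁ + i)) = blockState σ u (q' + (ρ₂ + i)) := by
  induction i with
  | zero => exact ⟨h, h'⟩
  | succ i ih =>
    obtain ⟨h₁, h₂⟩ := ih (by omega)
    have hi₁ : ρ₁ + i + 1 < n := by omega
    have hD' : ∀ j < n, ¬(IsCut σ u (q' + j) ∧ IsCut σ u (q + j)) := fun j hj hc => hD j hj hc.symm
    exact ⟨blockState_succ_eq_of_no_common_cut hne hfix hh h₁ h₂ (hC _ hi₁) (hC _ hi)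
        (hD _ hi₁) (hD _ hi),
      blockState_succ_eq_of_no_common_cut hne hfix hh h₂ h₁ (hC _ hi₁).symm (hC _ hi).symm
        (hD' _ hi₁) (hD' _ hi)⟩

/-- The pair of block states along the two windows ranges over a finite set, so it repeats
within a bounded time, and from then on it is periodic. -/
lemma exists_period_of_no_common_cut [Fintype A]
    (hh : Function.Injective fun a => (σ a).head (hne a)) {q q' n : ℕ}
    (hC : ∀ j < n, u (q + j) = u (q' + j))
    (hD : ∀ j < n, ¬(IsCut σ u (q + j) ∧ IsCut σ u (q' + j))) :
    ∃ ρ₁ ρ₂, ρ₁ < ρ₂ ∧ ρ₂ ≤ (Fintype.card A * maxLen σ) ^ 2 ∧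
      ∀ i, ρ₂ + i < n → u (q + (ρ₁ + i)) = u (q + (ρ₂ + i)) := by
  set S : Finset (A × ℕ) := Finset.univ ×ˢ Finset.range (maxLen σ)
  have hS : ∀ p, blockState σ u p ∈ S := fun p => by
    simpa [S] using (blockState_snd_lt hne p).trans_le (length_le_maxLen σ _)
  have hcard : (S ×ˢ S).card < (Finset.range ((Fintype.card A * maxLen σ) ^ 2 + 1)).card := by
    simp [S, sq]
  obtain ⟨x, hx, y, hy, hxy, hf⟩ := Finset.exists_ne_map_eq_of_card_lt_of_maps_to hcard
    (f := fun ρ => (blockState σ u (q + ρ), blockState σ u (q' + ρ)))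
    fun ρ _ => Finset.mem_product.2 ⟨hS _, hS _⟩
  obtain ⟨h, h'⟩ := Prod.mk.inj hf
  simp only [Finset.mem_range] at hx hy
  rcases Nat.lt_or_gt_of_ne hxy with hlt | hlt
  · exact ⟨x, y, hlt, by omega, fun i hi => eq_of_blockState_eq hne hfix
      (blockState_add_eq_of_no_common_cut hne hfix hh hC hD hlt.le h h' i hi).1⟩
  · exact ⟨y, x, hlt, by omega, fun i hi => eq_of_blockState_eq hne hfix
      (blockState_add_eq_of_no_common_cut hne hfix hh hC hD hlt.le h.symm h'.symm i hi).1⟩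

end Windows

section Recurrence

variable {σ : A → List A} {u : ℕ → A}

lemma PeriodicSeq.of_card_le_one [Fintype A] (h : Fintype.card A ≤ 1) (x : ℕ → A) :
    PeriodicSeq x :=
  ⟨1, one_pos, fun _ => Fintype.card_le_one_iff.1 h _ _⟩

lemma two_le_length_of_forall_mem [Fintype A] (hA : 1 < Fintype.card A)
    (hprim : ∀ a b : A, b ∈ σ a) (a : A) : 2 ≤ (σ a).length := by
  obtain ⟨b, c, hbc⟩ := Fintype.exists_pair_of_one_lt_card hA
  match h : σ a, hprim a b, hprim a c with
  | [x], hb, hc => exact absurd ((List.mem_singleton.1 hb).trans (List.mem_singleton.1 hc).symm) hbc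
  | _ :: _ :: _, _, _ => simp

lemma two_pow_le_length_iterate (h2 : ∀ a, 2 ≤ (σ a).length) (N : ℕ) (a : A) :
    2 ^ N ≤ ((wordMap σ)^[N] [a]).length := by
  induction N with
  | zero => simp
  | succ N ih =>
    rw [Function.iterate_succ_apply', pow_succ, mul_comm]
    exact (Nat.mul_le_mul_left 2 ih).trans (two_mul_length_le_length_wordMap h2 _)

lemma prefixWord_infix_iterate (hne : ∀ a, σ a ≠ []) (hfix : IsFixedPointSubst σ u)
    (hprim : ∀ a b : A, b ∈ σ a) (h2 : ∀ a, 2 ≤ (σ a).length) (n : ℕ) (a : A) :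
    prefixWord u n <:+: (wordMap σ)^[n + 1] [a] := by
  obtain ⟨k, -, hk⟩ := wordMap_iterate_prefixWord hne hfix n 1
  have hn : n ≤ k := by
    have := two_pow_le_length_iterate h2 n (u 0)
    rw [show [u 0] = prefixWord u 1 from rfl, hk, length_prefixWord] at this
    exact (Nat.lt_two_pow_self).le.trans this
  obtain ⟨s, t, hst⟩ := List.append_of_mem (hprim a (u 0))
  have : (wordMap σ)^[n + 1] [a]
      = (wordMap σ)^[n] s ++ prefixWord u k ++ (wordMap σ)^[n] t := by
    rw [Function.iterate_succ_apply, wordMap_singleton, hst, wordMap_iterate_append,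
      ← List.singleton_append, wordMap_iterate_append, ← hk, List.append_assoc]
    rfl
  rw [this]
  exact (prefixWord_prefix u hn).isInfix.trans (List.infix_append _ _ _)

lemma exists_block_within [Fintype A] (hne : ∀ a, σ a ≠ []) (Q : ℕ) :
    ∃ k, Q ≤ blockStart σ u k ∧ blockStart σ u (k + 1) ≤ Q + 2 * maxLen σ := by
  refine ⟨blockIdx σ u Q + 1, (lt_blockStart_blockIdx_succ hne Q).le, ?_⟩
  have h₁ := blockStart_blockIdx_le (σ := σ) (u := u) Q
  rw [blockStart_succ, blockStart_succ]
  have := length_le_maxLen σ (u (blockIdx σ u Q))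
  have := length_le_maxLen σ (u (blockIdx σ u Q + 1))
  omega

lemma exists_prefixWord_occurrence_within [Fintype A] (hne : ∀ a, σ a ≠ [])
    (hfix : IsFixedPointSubst σ u) (hprim : ∀ a b : A, b ∈ σ a) (h2 : ∀ a, 2 ≤ (σ a).length)
    (n Q : ℕ) : ∃ p, Q ≤ p ∧ p + n ≤ Q + 2 * maxLen (fun a => (wordMap σ)^[n + 1] [a]) ∧
      ∀ i < n, u i = u (p + i) := by
  have hne' := wordMap_iterate_singleton_ne_nil hne (n + 1)
  obtain ⟨k, hk₁, hk₂⟩ := exists_block_within (u := u) hne' Q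
  have hblock := factorAt_blockStart hne' (hfix.iterate hne (n + 1)) k 1
  rw [show factorAt u k 1 = [u k] by simp [factorAt], wordMap_singleton] at hblock
  have hocc := prefixWord_infix_iterate hne hfix hprim h2 n (u k)
  rw [← hblock] at hocc
  obtain ⟨p, hp₁, hp₂, hp⟩ := exists_eq_factorAt_of_infix hocc
  rw [length_prefixWord] at hp₂
  rw [length_prefixWord, prefixWord_eq_factorAt, factorAt_eq_factorAt_iff] at hp
  have hmono := (blockStart_strictMono (u := u) hne').monotone (Nat.le_add_right k 1)
  exact ⟨p, by omega, by omega, fun i hi => by simpa using hp i hi⟩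

lemma PeriodicSeq.of_forall_exists_prefix_period {x : ℕ → A} {B : ℕ}
    (h : ∀ n, ∃ π, 0 < π ∧ π ≤ B ∧ ∀ i, i + π < n → x (i + π) = x i) : PeriodicSeq x := by
  choose f hf₀ hfB hf using h
  obtain ⟨π, hπ⟩ := Finite.exists_infinite_fiber
    fun n => (⟨f n, Nat.lt_succ_of_le (hfB n)⟩ : Fin (B + 1))
  have hπ := Set.infinite_coe_iff.1 hπ
  obtain ⟨n₀, hn₀, -⟩ := hπ.exists_gt 0
  refine ⟨π, by simpa [← congrArg Fin.val hn₀] using hf₀ n₀, fun i => ?_⟩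
  obtain ⟨n, hn, hlt⟩ := hπ.exists_gt (i + π)
  have hn : f n = π := congrArg Fin.val hn
  exact hn ▸ hf n i (hn ▸ hlt)

/-- By uniform recurrence, every prefix of `u` occurs in each long enough factor and so
inherits its period. -/
lemma PeriodicSeq.of_forall_exists_periodic_factor [Fintype A] (hne : ∀ a, σ a ≠ [])
    (hfix : IsFixedPointSubst σ u) (hprim : ∀ a b : A, b ∈ σ a) {B : ℕ}
    (h : ∀ m, ∃ π, 0 < π ∧ π ≤ B ∧ ∃ Q, ∀ i < m, u (Q + i + π) = u (Q + i)) :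
    PeriodicSeq u := by
  by_cases hA : Fintype.card A ≤ 1
  · exact PeriodicSeq.of_card_le_one hA u
  have h2 := two_le_length_of_forall_mem (not_le.1 hA) hprim
  refine PeriodicSeq.of_forall_exists_prefix_period (B := B) fun n => ?_
  obtain ⟨π, hπ, hπB, Q, hQ⟩ := h (2 * maxLen (fun a => (wordMap σ)^[n + 1] [a]) + n)
  obtain ⟨p, hp₁, hp₂, hp⟩ := exists_prefixWord_occurrence_within hne hfix hprim h2 n Q
  refine ⟨π, hπ, hπB, fun i hi => ?_⟩
  have := hQ (p + i - Q) (by omega)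
  rw [show Q + (p + i - Q) = p + i by omega] at this
  rw [hp _ hi, ← Nat.add_assoc, this, ← hp i (by omega)]

end Recurrence

section Recognizability

variable {σ : A → List A} {u : ℕ → A}

lemma BlockStatesAgree.isCut_iff (hne : ∀ a, σ a ≠ []) {q q' n : ℕ}
    (h : BlockStatesAgree σ u q q' n) (hn : 0 < n) : IsCut σ u q ↔ IsCut σ u q' := by
  simpa using isCut_iff_of_blockState_eq hne (h 0 hn)

lemma BlockStatesAgree.isCut_add_iff (hne : ∀ a, σ a ≠ []) {q q' n : ℕ}
    (h : BlockStatesAgree σ u q q' n) (hn : 0 < n) :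
    IsCut σ u (q + n) ↔ IsCut σ u (q' + n) := by
  obtain ⟨m, rfl⟩ := Nat.exists_eq_add_one_of_ne_zero hn.ne'
  exact isCut_succ_iff_of_blockState_eq hne (h m (by omega))

lemma BlockStatesAgree.isCut_add_of_ne (hne : ∀ a, σ a ≠ []) (hfix : IsFixedPointSubst σ u)
    {q q' n : ℕ} (h : BlockStatesAgree σ u q q' n) (hn : 0 < n) (hu : u (q + n) ≠ u (q' + n)) :
    IsCut σ u (q + n) := by
  by_contra hc
  obtain ⟨m, rfl⟩ := Nat.exists_eq_add_one_of_ne_zero hn.ne'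
  have hc' := (h.isCut_add_iff hne hn).not.1 hc
  simp only [← Nat.add_assoc] at hc hc' hu
  refine hu (eq_of_blockState_eq hne hfix ?_)
  rw [blockState_succ_of_not_isCut hne hc, blockState_succ_of_not_isCut hne hc', h m (by omega)]

lemma BlockStatesAgree.isCut_of_ne (hne : ∀ a, σ a ≠ []) (hfix : IsFixedPointSubst σ u)
    {r r' n : ℕ} (h : BlockStatesAgree σ u (r + 1) (r' + 1) n) (hn : 0 < n) (hu : u r ≠ u r') :
    IsCut σ u (r + 1) := by
  by_contra hc
  have hc' := (h.isCut_iff hne hn).not.1 hc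
  have := h 0 hn
  rw [Nat.add_zero, Nat.add_zero, blockState_succ_of_not_isCut hne hc,
    blockState_succ_of_not_isCut hne hc'] at this
  obtain ⟨h₁, h₂⟩ := Prod.mk.inj this
  exact hu (eq_of_blockState_eq hne hfix (Prod.ext h₁ (by omega)))

/-- Recognizability, in the spirit of Mossé's theorem. -/
theorem exists_blockStatesAgree [Fintype A] (hne : ∀ a, σ a ≠ []) (hfix : IsFixedPointSubst σ u)
    (hm : MarkedSubst σ hne) (hprim : ∀ a b : A, b ∈ σ a) (hnp : ¬PeriodicSeq u) :
    ∃ L, ∀ q q' n, L < n → factorAt u q n = factorAt u q' n → BlockStatesAgree σ u q q' n := by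
  by_contra! h
  refine hnp (PeriodicSeq.of_forall_exists_periodic_factor hne hfix hprim
    (B := (Fintype.card A * maxLen σ) ^ 2) fun m => ?_)
  obtain ⟨q, q', n, hn, hW, hS⟩ := h (m + (Fintype.card A * maxLen σ) ^ 2)
  have hC := (factorAt_eq_factorAt_iff u).1 hW
  have hD : ∀ j < n, ¬(IsCut σ u (q + j) ∧ IsCut σ u (q' + j)) := fun j hj hcut =>
    hS (blockStatesAgree_of_blockState_eq hne hfix hm.1 hm.2 hC hj
      (blockState_eq_of_isCut hne hfix hm.1 hcut.1 hcut.2 (hC j hj)))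
  obtain ⟨ρ₁, ρ₂, h₁₂, hρ₂, hper⟩ := exists_period_of_no_common_cut hne hfix hm.1 hC hD
  refine ⟨ρ₂ - ρ₁, by omega, hρ₂.trans' (Nat.sub_le _ _), q + ρ₁, fun i hi => ?_⟩
  rw [show q + ρ₁ + i + (ρ₂ - ρ₁) = q + (ρ₂ + i) by omega, Nat.add_assoc]
  exact (hper i (by omega)).symm

end Recognizability

lemma exists_factorAt_of_append_singleton_mem {u : ℕ → A} {W : List A} {b : A}
    (h : W ++ [b] ∈ Lang u) : ∃ q, factorAt u q W.length = W ∧ u (q + W.length) = b := by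
  obtain ⟨q, hq⟩ := h
  rw [List.length_append, List.length_singleton, factorAt_succ] at hq
  obtain ⟨h₁, h₂⟩ := List.append_inj' hq rfl
  exact ⟨q, h₁.symm, (List.singleton_inj.1 h₂).symm⟩

lemma exists_factorAt_of_cons_mem {u : ℕ → A} {W : List A} {a : A} (h : a :: W ∈ Lang u) :
    ∃ r, factorAt u (r + 1) W.length = W ∧ u r = a := by
  obtain ⟨r, hr⟩ := h
  rw [List.length_cons, factorAt_succ'] at hr
  obtain ⟨h₁, h₂⟩ := List.cons.inj hr
  exact ⟨r, h₂.symm, h₁.symm⟩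

def IsCutBounded (σ : A → List A) (u : ℕ → A) (W : List A) : Prop :=
  ∀ q, factorAt u q W.length = W → IsCut σ u q ∧ IsCut σ u (q + W.length)

section Desubstitution

variable {σ : A → List A} {u : ℕ → A} (hne : ∀ a, σ a ≠ []) (hfix : IsFixedPointSubst σ u)
include hne hfix

lemma head_block (k : ℕ) : (σ (u k)).head (hne _) = u (blockStart σ u k) := by
  rw [List.head_eq_getElem, getElem_block hne hfix, Nat.add_zero]

lemma getLast_block (k : ℕ) : (σ (u k)).getLast (hne _) = u (blockStart σ u (k + 1) - 1) := by
  rw [List.getLast_eq_getElem, getElem_block hne hfix, blockStart_succ]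
  congr 1
  have := List.length_pos_iff.2 (hne (u k))
  omega

lemma exists_factorAt_eq_wordMap {q n : ℕ} (h₁ : IsCut σ u q) (h₂ : IsCut σ u (q + n)) :
    ∃ k l, blockStart σ u k = q ∧ blockStart σ u (k + l) = q + n ∧
      factorAt u q n = wordMap σ (factorAt u k l) := by
  obtain ⟨k, rfl⟩ := h₁
  obtain ⟨k', hk'⟩ := h₂
  have hkk' : k ≤ k' := (blockStart_strictMono (u := u) hne).le_iff_le.1 (by omega)
  refine ⟨k, k' - k, rfl, by rwa [Nat.add_sub_cancel' hkk'], ?_⟩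
  rw [← factorAt_blockStart hne hfix, Nat.add_sub_cancel' hkk', hk', Nat.add_sub_cancel_left]

lemma IsCutBounded.exists_append_singleton_mem
    (hl : Function.Injective fun a => (σ a).getLast (hne a)) {W x : List A} {b : A}
    (hW : IsCutBounded σ u W) (hx : W = wordMap σ x) (hb : W ++ [b] ∈ Lang u) :
    ∃ d, x ++ [d] ∈ Lang u ∧ (σ d).head (hne d) = b := by
  obtain ⟨q, hq, hqb⟩ := exists_factorAt_of_append_singleton_mem hb
  obtain ⟨k, l, -, hkl, hkW⟩ := exists_factorAt_eq_wordMap hne hfix (hW q hq).1 (hW q hq).2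
  obtain rfl : x = factorAt u k l := wordMap_injective hne hl (by rw [← hx, ← hkW, hq])
  exact ⟨u (k + l), factorAt_succ u k l ▸ factorAt_mem_Lang u k (l + 1),
    by rw [head_block hne hfix, hkl, hqb]⟩

lemma IsCutBounded.exists_cons_mem
    (hl : Function.Injective fun a => (σ a).getLast (hne a)) {W x : List A} {a : A}
    (hW : IsCutBounded σ u W) (hx : W = wordMap σ x) (ha : a :: W ∈ Lang u) :
    ∃ d, d :: x ∈ Lang u ∧ (σ d).getLast (hne d) = a := by
  obtain ⟨r, hr, hra⟩ := exists_factorAt_of_cons_mem ha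
  obtain ⟨k, l, hk, -, hkW⟩ :=
    exists_factorAt_eq_wordMap hne hfix (hW (r + 1) hr).1 (hW (r + 1) hr).2
  obtain rfl : x = factorAt u k l := wordMap_injective hne hl (by rw [← hx, ← hkW, hr])
  obtain ⟨k, rfl⟩ : ∃ k', k = k' + 1 :=
    Nat.exists_eq_add_one_of_ne_zero (by rintro rfl; simp at hk)
  refine ⟨u k, ?_, by rw [getLast_block hne hfix, hk, Nat.add_sub_cancel, hra]⟩
  rw [← factorAt_succ']
  exact factorAt_mem_Lang u k (l + 1)

theorem exists_isCutBounded_of_bispecial [Fintype A] (hm : MarkedSubst σ hne)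
    (hprim : ∀ a b : A, b ∈ σ a) (hnp : ¬PeriodicSeq u) :
    ∃ L, ∀ W, Bispecial u W → L < W.length → IsCutBounded σ u W := by
  obtain ⟨L, hL⟩ := exists_blockStatesAgree hne hfix hm hprim hnp
  refine ⟨L, fun W ⟨⟨b, c, hbc, hWb, hWc⟩, ⟨a₁, a₂, ha, hW₁, hW₂⟩⟩ hW q hq => ?_⟩
  have hn : 0 < W.length := by omega
  obtain ⟨q₁, hq₁, hb⟩ := exists_factorAt_of_append_singleton_mem hWb
  obtain ⟨q₂, hq₂, hc⟩ := exists_factorAt_of_append_singleton_mem hWc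
  obtain ⟨r₁, hr₁, ha₁⟩ := exists_factorAt_of_cons_mem hW₁
  obtain ⟨r₂, hr₂, ha₂⟩ := exists_factorAt_of_cons_mem hW₂
  have agree : ∀ {p p'}, factorAt u p W.length = W → factorAt u p' W.length = W →
      BlockStatesAgree σ u p p' W.length := fun hp hp' => hL _ _ _ hW (hp.trans hp'.symm)
  have hend : IsCut σ u (q₁ + W.length) :=
    (agree hq₁ hq₂).isCut_add_of_ne hne hfix hn (by rw [hb, hc]; exact hbc)
  have hstart : IsCut σ u (r₁ + 1) :=
    (agree hr₁ hr₂).isCut_of_ne hne hfix hn (by rw [ha₁, ha₂]; exact ha)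
  exact ⟨((agree hq hr₁).isCut_iff hne hn).2 hstart,
    ((agree hq hq₁).isCut_add_iff hne hn).2 hend⟩

theorem exists_bispecial_eq_wordMap [Fintype A] (hm : MarkedSubst σ hne)
    (hprim : ∀ a b : A, b ∈ σ a) (hnp : ¬PeriodicSeq u) :
    ∃ L, ∀ W, Bispecial u W → L < W.length → ∃ x, Bispecial u x ∧ W = wordMap σ x := by
  obtain ⟨L, hL⟩ := exists_isCutBounded_of_bispecial hne hfix hm hprim hnp
  refine ⟨L, fun W hWB hW => ?_⟩
  have hcut := hL W hWB hW
  obtain ⟨⟨b, c, hbc, hWb, hWc⟩, ⟨a₁, a₂, ha, hW₁, hW₂⟩⟩ := hWB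
  obtain ⟨q, hq, -⟩ := exists_factorAt_of_append_singleton_mem hWb
  obtain ⟨k, l, -, -, hx⟩ := exists_factorAt_eq_wordMap hne hfix (hcut q hq).1 (hcut q hq).2
  rw [hq] at hx
  obtain ⟨d₁, hd₁, rfl⟩ := hcut.exists_append_singleton_mem hne hfix hm.2 hx hWb
  obtain ⟨d₂, hd₂, rfl⟩ := hcut.exists_append_singleton_mem hne hfix hm.2 hx hWc
  obtain ⟨e₁, he₁, rfl⟩ := hcut.exists_cons_mem hne hfix hm.2 hx hW₁
  obtain ⟨e₂, he₂, rfl⟩ := hcut.exists_cons_mem hne hfix hm.2 hx hW₂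
  exact ⟨_, ⟨⟨d₁, d₂, fun h => hbc (h ▸ rfl), hd₁, hd₂⟩,
    ⟨e₁, e₂, fun h => ha (h ▸ rfl), he₁, he₂⟩⟩, hx⟩

end Desubstitution

section Descent

variable {σ : A → List A} {u : ℕ → A}

lemma length_wordMap_iterate (σ : A → List A) (k : ℕ) (l : List A) :
    ((wordMap σ)^[k] l).length = (l.map fun c => ((wordMap σ)^[k] [c]).length).sum := by
  rw [← wordMap_iterate_singleton, length_wordMap]
  simp only [wordMap_singleton]

lemma length_iterate_le_maxLen_mul [Fintype A] (hprim : ∀ a b : A, b ∈ σ a) (k : ℕ) (a b : A) :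
    ((wordMap σ)^[k] [a]).length ≤ maxLen σ * ((wordMap σ)^[k] [b]).length := by
  cases k with
  | zero =>
    simp only [Function.iterate_zero, id_eq, List.length_singleton, Nat.mul_one]
    exact Nat.succ_le_of_lt ((List.length_pos_of_mem (hprim a a)).trans_le (length_le_maxLen σ a))
  | succ k =>
    obtain ⟨c, -, hc⟩ := Finset.exists_max_image Finset.univ
      (fun c => ((wordMap σ)^[k] [c]).length) ⟨a, Finset.mem_univ a⟩
    rw [Function.iterate_succ_apply, wordMap_singleton, Function.iterate_succ_apply,
      wordMap_singleton, length_wordMap_iterate σ k (σ a), length_wordMap_iterate σ k (σ b)]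
    calc ((σ a).map fun c => ((wordMap σ)^[k] [c]).length).sum
        ≤ (σ a).length * ((wordMap σ)^[k] [c]).length := by
          simpa using List.sum_le_card_nsmul ((σ a).map fun c => ((wordMap σ)^[k] [c]).length) _
            fun x hx => by
              obtain ⟨d, -, rfl⟩ := List.mem_map.1 hx
              exact hc d (Finset.mem_univ d)
      _ ≤ maxLen σ * ((wordMap σ)^[k] [c]).length :=
          Nat.mul_le_mul_right _ (length_le_maxLen σ a)
      _ ≤ maxLen σ * ((σ b).map fun c => ((wordMap σ)^[k] [c]).length).sum :=
          Nat.mul_le_mul_left _ (List.le_sum_of_mem (List.mem_map_of_mem (hprim b c)))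

lemma length_iterate_le_mul [Fintype A] (hprim : ∀ a b : A, b ∈ σ a) (k : ℕ) {w r : List A}
    (hr : r ≠ []) :
    ((wordMap σ)^[k] w).length ≤ w.length * maxLen σ * ((wordMap σ)^[k] r).length := by
  obtain ⟨b, r, rfl⟩ := List.exists_cons_of_ne_nil hr
  calc ((wordMap σ)^[k] w).length ≤ w.length • (maxLen σ * ((wordMap σ)^[k] [b]).length) := by
        rw [length_wordMap_iterate]
        simpa using List.sum_le_card_nsmul (w.map fun c => ((wordMap σ)^[k] [c]).length) _
          fun x hx => by
            obtain ⟨a, -, rfl⟩ := List.mem_map.1 hx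
            exact length_iterate_le_maxLen_mul hprim k a b
    _ ≤ w.length * maxLen σ * ((wordMap σ)^[k] (b :: r)).length := by
        have : ((wordMap σ)^[k] (b :: r)).length
            = ((wordMap σ)^[k] [b]).length + ((wordMap σ)^[k] r).length := by
          rw [← List.length_append, ← wordMap_iterate_append, List.singleton_append]
        rw [smul_eq_mul, Nat.mul_assoc, this]
        exact Nat.mul_le_mul_left _ (Nat.mul_le_mul_left _ (Nat.le_add_right _ _))

theorem exists_bispecial_suffix_eq_iterate [Fintype A] (hne : ∀ a, σ a ≠ [])
    (hfix : IsFixedPointSubst σ u) (hm : MarkedSubst σ hne) (hprim : ∀ a b : A, b ∈ σ a)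
    (hnp : ¬PeriodicSeq u) :
    ∃ L, ∀ w U, Bispecial u w → Bispecial u U → w <:+ U → w.length < U.length →
      ∃ k w₀ r, r ≠ [] ∧ w₀.length ≤ L ∧ w = (wordMap σ)^[k] w₀ ∧
        U = (wordMap σ)^[k] (r ++ w₀) := by
  obtain ⟨L, hL⟩ := exists_bispecial_eq_wordMap hne hfix hm hprim hnp
  have h2 := two_le_length_of_forall_mem
    (not_le.1 fun h => hnp (PeriodicSeq.of_card_le_one h u)) hprim
  refine ⟨L, fun w => ?_⟩
  induction hN : w.length using Nat.strong_induction_on generalizing w with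
  | _ N ih =>
    intro U hw hU hwU hlt
    by_cases hwL : w.length ≤ L
    · obtain ⟨r, rfl⟩ := hwU
      exact ⟨0, w, r, by rintro rfl; simp at hlt; omega, hwL, rfl, rfl⟩
    obtain ⟨x, hx, rfl⟩ := hL w hw (by omega)
    obtain ⟨y, hy, rfl⟩ := hL U hU (by omega)
    have hxy := IsSuffix.of_wordMap hne hm.2 hwU
    have hxy' : x.length < y.length :=
      lt_of_le_of_ne hxy.length_le fun h => by rw [hxy.eq_of_length h] at hN; omega
    have hxw : x.length < (wordMap σ x).length := by
      have hx₀ : x ≠ [] := by rintro rfl; simp at hwL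
      have := two_mul_length_le_length_wordMap h2 x
      have := List.length_pos_iff.2 hx₀
      omega
    obtain ⟨k, w₀, r, hr, hw₀, rfl, rfl⟩ := ih x.length (hN ▸ hxw) x rfl y hx hy hxy hxy'
    exact ⟨k + 1, w₀, r, hr, hw₀, (Function.iterate_succ_apply' _ _ _).symm,
      (Function.iterate_succ_apply' _ _ _).symm⟩

end Descent

theorem exists_bispecial_suffix_length_le [Fintype A] {σ : A → List A} {u : ℕ → A}
    (hne : ∀ a, σ a ≠ []) (hfix : IsFixedPointSubst σ u) (hm : MarkedSubst σ hne)
    (hprim : ∀ a b : A, b ∈ σ a) (hnp : ¬PeriodicSeq u) :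
    ∃ C : ℝ, 0 < C ∧ C < 1 ∧ ∀ w U, Bispecial u w → Bispecial u U → w <:+ U →
      w.length < U.length → (w.length : ℝ) ≤ C * U.length := by
  obtain ⟨L, hL⟩ := exists_bispecial_suffix_eq_iterate hne hfix hm hprim hnp
  set K := L * maxLen σ + 1
  refine ⟨K / (K + 1), by positivity, (div_lt_one (by positivity)).2 (by linarith), ?_⟩
  intro w U hw hU hwU hlt
  obtain ⟨k, w₀, r, hr, hw₀, rfl, rfl⟩ := hL w U hw hU hwU hlt
  have hle : ((wordMap σ)^[k] w₀).length ≤ K * ((wordMap σ)^[k] r).length :=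
    calc _ ≤ w₀.length * maxLen σ * ((wordMap σ)^[k] r).length := length_iterate_le_mul hprim k hr
      _ ≤ K * ((wordMap σ)^[k] r).length :=
        Nat.mul_le_mul_right _ ((Nat.mul_le_mul_right _ hw₀).trans (Nat.le_succ _))
  have hnat : ((wordMap σ)^[k] w₀).length * (K + 1) ≤ K * ((wordMap σ)^[k] (r ++ w₀)).length := by
    rw [wordMap_iterate_append, List.length_append]
    linarith
  rw [div_mul_eq_mul_div, le_div_iff₀ (by positivity)]
  exact_mod_cast hnat

theorem exists_bispecial_suffix_length_le_of_primitive [Fintype A] {H : A → List A}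
    {u : ℕ → A} (hne : ∀ a, H a ≠ []) (hprim : PrimitiveSubst H) (haper : AperiodicSubst H)
    (hm : MarkedSubst H hne) (hu : IsFixedPointSubst H u) :
    ∃ C : ℝ, 0 < C ∧ C < 1 ∧ ∀ w U, Bispecial u w → Bispecial u U → w <:+ U →
      w.length < U.length → (w.length : ℝ) ≤ C * U.length := by
  obtain ⟨k, -, hk⟩ := hprim
  exact exists_bispecial_suffix_length_le (wordMap_iterate_singleton_ne_nil hne k)
    (hu.iterate hne k) (hm.iterate k) hk (haper u hu)

lemma RightSpecial.of_suffix {u : ℕ → A} {w U : List A} (hU : RightSpecial u U) (h : w <:+ U) :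
    RightSpecial u w := by
  obtain ⟨b, c, hbc, hb, hc⟩ := hU
  obtain ⟨s, rfl⟩ := h
  exact ⟨b, c, hbc, mem_Lang_of_infix hb ⟨s, [], by simp⟩, mem_Lang_of_infix hc ⟨s, [], by simp⟩⟩

lemma LeftSpecial.of_prefix {u : ℕ → A} {w V : List A} (hV : LeftSpecial u V) (h : w <+: V) :
    LeftSpecial u w := by
  obtain ⟨a, b, hab, ha, hb⟩ := hV
  obtain ⟨t, rfl⟩ := h
  exact ⟨a, b, hab, mem_Lang_of_infix ha ⟨[], t, by simp⟩, mem_Lang_of_infix hb ⟨[], t, by simp⟩⟩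

theorem bispecial_overlap_control_general
    {A : Type*} [Fintype A]
    (H : A → List A) (hne : ∀ a, H a ≠ [])
    (hprim : PrimitiveSubst H) (haper : AperiodicSubst H)
    (hmarked : MarkedSubst H hne)
    (u : ℕ → A) (hu : IsFixedPointSubst H u) :
    ∃ C : ℝ, 0 < C ∧ C < 1 ∧
      ∀ z : ℕ → A, (∀ i n : ℕ, factorAt z i n ∈ Lang u) →
        ∀ U V : List A, U ∈ Lang u → V ∈ Lang u →
          Bispecial u U → Bispecial u V →
          ∀ i j : ℕ, factorAt z i U.length = U → factorAt z j V.length = V →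
            i < j → j < i + U.length → U.length ≤ V.length →
            ((i + U.length - j : ℕ) : ℝ) ≤ C * (U.length : ℝ) := by
  obtain ⟨C, hC₀, hC₁, hC⟩ :=
    exists_bispecial_suffix_length_le_of_primitive hne hprim haper hmarked hu
  refine ⟨C, hC₀, hC₁, fun z _ U V _ _ hU hV i j hUi hVj hij hji _ => ?_⟩
  set o := i + U.length - j
  have hsuf : factorAt z j o <:+ U := by
    have := factorAt_add z i (j - i) o
    rw [show i + (j - i) = j by omega, show j - i + o = U.length by omega, hUi] at this
    exact ⟨_, this.symm⟩
  have hpre : factorAt z j o <+: V := by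
    have := factorAt_add z j o (V.length - o)
    rw [show o + (V.length - o) = V.length by omega, hVj] at this
    exact ⟨_, this.symm⟩
  simpa using hC _ U ⟨hU.1.of_suffix hsuf, hV.2.of_prefix hpre⟩ hU hsuf (by simp; omega)

/-- (Lemma `lem:overlapcontrol`.) Two overlapping occurrences of
bispecial words `U`, `V` (with `|U| ≤ |V|`) in a sequence all of whose factors lie
in the language overlap on at most a fixed proportion `C < 1` of `|U|`. -/
theorem bispecial_overlap_control
    {A : Type*} [Fintype A] [DecidableEq A] [TopologicalSpace A] [DiscreteTopology A]
    (H : A → List A) (hne : ∀ a, H a ≠ [])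
    (hprim : PrimitiveSubst H) (haper : AperiodicSubst H)
    (hmarked : MarkedSubst H hne)
    (u : ℕ → A) (hu : IsFixedPointSubst H u) :
    ∃ C : ℝ, 0 < C ∧ C < 1 ∧
      ∀ z : ℕ → A, (∀ i n : ℕ, factorAt z i n ∈ Lang u) →
        ∀ U V : List A, U ∈ Lang u → V ∈ Lang u →
          Bispecial u U → Bispecial u V →
          ∀ i j : ℕ, factorAt z i U.length = U → factorAt z j V.length = V →
            i < j → j < i + U.length → U.length ≤ V.length →
            ((i + U.length - j : ℕ) : ℝ) ≤ C * (U.length : ℝ) :=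
  bispecial_overlap_control_general H hne hprim haper hmarked u hu
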